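/- arXiv:1902.10788 — 3 statements merged into one kernel-verified Lean document; each statement's English description precedes it below -/
import Mathlib

section
/- In any finite directed multigraph in which, at a given vertex v, the total number of times a fixed family of closed directed walks enters v equals the total number of times they leave v, and the walks double cover the edge set consistently with edge directions: the number of type-II edges directed into v equals the number of type-II edges directed out of v. -/
/-- The head of the traversal of the edge `x` in direction `b`
(`b = true` means the edge is traversed from `(ends x).1` to `(ends x).2`). -/
def travHead {V E : Type} (ends : E → V × V) (b : Bool) (x : E) : V :=
  if b then (ends x).2 else (ends x).1

/-- The tail of the traversal of the edge `x` in direction `b`. -/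
def travTail {V E : Type} (ends : E → V × V) (b : Bool) (x : E) : V :=
  if b then (ends x).1 else (ends x).2

/-- In any finite directed multigraph in which, at a given vertex
`v`, the total number of times a fixed family of closed directed walks enters
`v` equals the total number of times they leave `v`, and the walks double
cover the edge set (each edge `x` receives two traversals, with directions
`d1 x` and `d2 x`): the number of type II edges (those whose two traversals
agree in direction) directed into `v` equals the number of type II edges
directed out of `v`. -/
theorem stmt2 {V E : Type} [DecidableEq V] [Fintype E]
    (ends : E → V × V) (d1 d2 : E → Bool) (v : V)
    (hbal :
      (Finset.univ.filter fun p : E × Bool =>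
        travHead ends (if p.2 then d2 p.1 else d1 p.1) p.1 = v).card =
      (Finset.univ.filter fun p : E × Bool =>
        travTail ends (if p.2 then d2 p.1 else d1 p.1) p.1 = v).card) :
    (Finset.univ.filter fun x : E =>
      d1 x = d2 x ∧ travHead ends (d1 x) x = v).card =
    (Finset.univ.filter fun x : E =>
      d1 x = d2 x ∧ travTail ends (d1 x) x = v).card := by
  classical
  have tt : ∀ (b : Bool) (x : E), travTail ends b x = travHead ends (!b) x := by
    intro b x; cases b <;> simp [travHead, travTail]
  have key : ∀ (g : Bool → E → V),
      (Finset.univ.filter fun p : E × Bool =>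
        g (if p.2 then d2 p.1 else d1 p.1) p.1 = v).card
      = ∑ x : E, ((if g (d1 x) x = v then 1 else 0) + (if g (d2 x) x = v then 1 else 0)) := by
    intro g
    rw [Finset.card_filter, Fintype.sum_prod_type]
    refine Finset.sum_congr rfl fun x _ => ?_
    rw [Fintype.sum_bool]
    simp [add_comm]
  rw [key (travHead ends), key (travTail ends)] at hbal
  set S := Finset.univ.filter (fun x : E => d1 x = d2 x) with hS
  have hsplit : ∀ (f : E → ℕ),
      ∑ x : E, f x = (∑ x ∈ S, f x)
        + ∑ x ∈ Finset.univ.filter (fun x => ¬ d1 x = d2 x), f x :=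
    fun f => (Finset.sum_filter_add_sum_filter_not _ _ _).symm
  rw [hsplit, hsplit] at hbal
  have hI : (∑ x ∈ Finset.univ.filter (fun x => ¬ d1 x = d2 x),
        ((if travHead ends (d1 x) x = v then 1 else 0)
          + (if travHead ends (d2 x) x = v then 1 else 0)))
      = ∑ x ∈ Finset.univ.filter (fun x => ¬ d1 x = d2 x),
        ((if travTail ends (d1 x) x = v then 1 else 0)
          + (if travTail ends (d2 x) x = v then 1 else 0)) := by
    refine Finset.sum_congr rfl fun x hx => ?_
    rw [Finset.mem_filter] at hx
    have hne : d2 x = !(d1 x) := by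
      cases h1 : d1 x <;> cases h2 : d2 x <;> simp_all
    rw [tt, tt, hne, Bool.not_not, add_comm]
  rw [hI] at hbal
  have hbal2 : (∑ x ∈ S, ((if travHead ends (d1 x) x = v then 1 else 0)
          + (if travHead ends (d2 x) x = v then 1 else 0)))
      = ∑ x ∈ S, ((if travTail ends (d1 x) x = v then 1 else 0)
          + (if travTail ends (d2 x) x = v then 1 else 0)) :=
    Nat.add_right_cancel hbal
  have hdouble : ∀ (g : Bool → E → V),
      (∑ x ∈ S, ((if g (d1 x) x = v then 1 else 0)
          + (if g (d2 x) x = v then 1 else 0)))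
      = 2 * ∑ x ∈ S, (if g (d1 x) x = v then 1 else 0) := by
    intro g
    rw [Finset.mul_sum]
    refine Finset.sum_congr rfl fun x hx => ?_
    rw [hS, Finset.mem_filter] at hx
    rw [← hx.2]
    ring
  rw [hdouble (travHead ends), hdouble (travTail ends)] at hbal2
  have hfin : (∑ x ∈ S, (if travHead ends (d1 x) x = v then 1 else 0))
      = ∑ x ∈ S, (if travTail ends (d1 x) x = v then 1 else 0) := by
    omega
  rw [hS, Finset.sum_filter, Finset.sum_filter] at hfin
  rw [Finset.card_filter, Finset.card_filter]
  simp only [ite_and]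
  exact hfin
end

section
/- For the n-gonal bipyramid BP_n with n odd, there is exactly one zigzag up to reversal; that is, BP_n is z-knotted, and the unique zigzag has length 6n (it traverses every edge exactly twice). -/
open Finset
open scoped Classical

/-- A combinatorial triangulation: a finite collection of (triangular) faces,
each given as a finite set of vertices. -/
structure Triangulation (V : Type) where
  faces : Finset (Finset V)

namespace Triangulation

variable {V : Type} [DecidableEq V] (T : Triangulation V)

/-- The edges: the 2-element subsets of faces. -/
def edges : Finset (Finset V) := T.faces.biUnion fun f => f.powersetCard 2

/-- The vertices actually used by the triangulation. -/
def verts : Finset V := T.faces.sup id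

/-- The combinatorial axioms of a triangulation of a closed surface:
faces are triangles, every edge lies in exactly two faces, and two distinct
faces meet in at most an edge. -/
def IsProper : Prop :=
  (∀ f ∈ T.faces, f.card = 3) ∧
  (∀ e ∈ T.edges, (T.faces.filter fun f => e ⊆ f).card = 2) ∧
  (∀ f ∈ T.faces, ∀ g ∈ T.faces, f ≠ g → (f ∩ g).card ≤ 2)

/-- The underlying (simple) graph of the triangulation. -/
def graph : SimpleGraph V where
  Adj x y := x ≠ y ∧ ({x, y} : Finset V) ∈ T.edges
  symm := ⟨fun x y h => ⟨h.1.symm, by rw [Finset.pair_comm y x]; exact h.2⟩⟩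
  loopless := ⟨fun x h => h.1 rfl⟩

/-- A zigzag: a bi-infinite periodic sequence of edges `e i` together with the
face `f i` containing the consecutive edges `e i` and `e (i+1)`, such that
consecutive faces are distinct and edges two apart are disjoint.
`head i` is the (unique) common vertex of `e i` and `e (i+1)`; thus the `i`-th
traversal goes from `head (i-1)` to `head i`. -/
structure Zigzag where
  e : ℤ → Finset V
  f : ℤ → Finset V
  head : ℤ → V
  e_mem : ∀ i, e i ∈ T.edges
  f_mem : ∀ i, f i ∈ T.faces
  sub_left : ∀ i, e i ⊆ f i
  sub_right : ∀ i, e (i + 1) ⊆ f i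
  edges_ne : ∀ i, e i ≠ e (i + 1)
  faces_ne : ∀ i, f i ≠ f (i + 1)
  disj : ∀ i, Disjoint (e i) (e (i + 2))
  inter_eq : ∀ i, e i ∩ e (i + 1) = {head i}
  exists_period : ∃ n : ℕ, 0 < n ∧ ∀ i, e (i + n) = e i ∧ f (i + n) = f i ∧ head (i + n) = head i

namespace Zigzag

variable {T}

/-- The length of a zigzag: the minimal period of its edge sequence. -/
noncomputable def length (Z : Zigzag T) : ℕ :=
  sInf {n : ℕ | 0 < n ∧ ∀ i, Z.e (i + n) = Z.e i}

/-- How many times the edge `a` occurs in one (minimal) period of `Z`. -/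
noncomputable def mult (Z : Zigzag T) (a : Finset V) : ℕ :=
  ((Finset.range Z.length).filter fun i => Z.e (i : ℤ) = a).card

/-- The direction (tail, head) of the `i`-th traversal of `Z`. -/
def dir (Z : Zigzag T) (i : ℤ) : V × V := (Z.head (i - 1), Z.head i)

/-- Two zigzags are the same cyclic sequence up to rotation or rotation
combined with reversal. -/
def Equiv (Z W : Zigzag T) : Prop :=
  (∃ k : ℤ, ∀ i, W.e i = Z.e (i + k)) ∨ (∃ k : ℤ, ∀ i, W.e i = Z.e (k - i))

end Zigzag

/-- A triangulation is z-knotted if it has a single zigzag up to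
rotation and reversal. -/
def IsZKnotted : Prop := Nonempty (Zigzag T) ∧ ∀ Z W : Zigzag T, Z.Equiv W

/-- A z-orientation: a collection of pairwise non-equivalent zigzags which
double covers the edge set. -/
structure ZOrientation where
  zigzags : List (Zigzag T)
  cover : ∀ a ∈ T.edges, (zigzags.map fun Z => Z.mult a).sum = 2
  nonequiv : zigzags.Pairwise fun Z W => ¬ Z.Equiv W

namespace ZOrientation

variable {T}

/-- All traversals of the edge `a` by the distinguished zigzags go in the
direction `d`. -/
def dirOf (τ : ZOrientation T) (a : Finset V) (d : V × V) : Prop :=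
  ∀ Z ∈ τ.zigzags, ∀ i : ℤ, Z.e i = a → Z.dir i = d

/-- An edge of type II: both traversals go in the same direction. -/
def TypeII (τ : ZOrientation T) (a : Finset V) : Prop := ∃ d, τ.dirOf a d

/-- An edge of type I: the two traversals go in different directions. -/
def TypeI (τ : ZOrientation T) (a : Finset V) : Prop := ¬ τ.TypeII a

/-- A vertex of type I: it belongs only to edges of type I. -/
def VertexTypeI (τ : ZOrientation T) (x : V) : Prop :=
  ∀ a ∈ T.edges, x ∈ a → τ.TypeI a

/-- A vertex of type II: it belongs to some edge of type II. -/
def VertexTypeII (τ : ZOrientation T) (x : V) : Prop :=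
  ∃ a ∈ T.edges, x ∈ a ∧ τ.TypeII a

/-- A face of type I: exactly one of its edges is of type II
(the other two being of type I). -/
def FaceTypeI (τ : ZOrientation T) (f : Finset V) : Prop :=
  ∃! a : Finset V, a ∈ f.powersetCard 2 ∧ τ.TypeII a

/-- A face of type II: all its edges are of type II and their directions
form a directed cycle. -/
def FaceTypeII (τ : ZOrientation T) (f : Finset V) : Prop :=
  ∃ x y z : V, f = {x, y, z} ∧ x ≠ y ∧ y ≠ z ∧ x ≠ z ∧
    τ.dirOf {x, y} (x, y) ∧ τ.dirOf {y, z} (y, z) ∧ τ.dirOf {z, x} (z, x)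

/-- A homogeneous zigzag: it contains precisely two edges of type I after each
edge of type II, i.e. it is a cyclic sequence of blocks (II, I, I). -/
def Homogeneous (τ : ZOrientation T) (Z : Zigzag T) : Prop :=
  ∃ k : ℤ, ∀ i : ℤ, τ.TypeII (Z.e (k + 3 * i)) ∧
    τ.TypeI (Z.e (k + 3 * i + 1)) ∧ τ.TypeI (Z.e (k + 3 * i + 2))

/-- The in-degree of a vertex in the digraph of type II edges. -/
noncomputable def inDeg (τ : ZOrientation T) (x : V) : ℕ :=
  (T.edges.filter fun a => τ.TypeII a ∧ ∃ u, a = {u, x} ∧ τ.dirOf a (u, x)).card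

/-- The out-degree of a vertex in the digraph of type II edges. -/
noncomputable def outDeg (τ : ZOrientation T) (x : V) : ℕ :=
  (T.edges.filter fun a => τ.TypeII a ∧ ∃ u, a = {x, u} ∧ τ.dirOf a (x, u)).card

/-- A special pair: two type II edges with a common vertex which are
interleaved in the zigzag `Z` as a, b, a, b within one period. -/
def SpecialPair (τ : ZOrientation T) (Z : Zigzag T) (a b : Finset V) : Prop :=
  a ≠ b ∧ (a ∩ b).Nonempty ∧ τ.TypeII a ∧ τ.TypeII b ∧
  ∃ i₁ i₂ i₃ i₄ : ℤ, i₁ < i₂ ∧ i₂ < i₃ ∧ i₃ < i₄ ∧ i₄ < i₁ + (Z.length : ℤ) ∧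
    Z.e i₁ = a ∧ Z.e i₂ = b ∧ Z.e i₃ = a ∧ Z.e i₄ = b

/-- Two special pairs `c₁,c₂` and `t₁,t₂` are concordant: the zigzag
interleaves them in the cyclic pattern c₁,t₁,c₂,t₂,c₁,t₁,c₂,t₂. -/
def Concordant (τ : ZOrientation T) (Z : Zigzag T) (c₁ c₂ t₁ t₂ : Finset V) : Prop :=
  τ.SpecialPair Z c₁ c₂ ∧ τ.SpecialPair Z t₁ t₂ ∧
  (c₁ ≠ t₁ ∧ c₁ ≠ t₂ ∧ c₂ ≠ t₁ ∧ c₂ ≠ t₂) ∧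
  ∃ i₁ i₂ i₃ i₄ i₅ i₆ i₇ i₈ : ℤ,
    i₁ < i₂ ∧ i₂ < i₃ ∧ i₃ < i₄ ∧ i₄ < i₅ ∧ i₅ < i₆ ∧ i₆ < i₇ ∧ i₇ < i₈ ∧
    i₈ < i₁ + (Z.length : ℤ) ∧
    Z.e i₁ = c₁ ∧ Z.e i₂ = t₁ ∧ Z.e i₃ = c₂ ∧ Z.e i₄ = t₂ ∧
    Z.e i₅ = c₁ ∧ Z.e i₆ = t₁ ∧ Z.e i₇ = c₂ ∧ Z.e i₈ = t₂

end ZOrientation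

end Triangulation

/-- The `n`-gonal bipyramid: two apexes (the `Bool` vertices) joined to every
vertex of an `n`-cycle. -/
def BP (n : ℕ) [NeZero n] : Triangulation (Bool ⊕ ZMod n) where
  faces := Finset.univ.image fun p : Bool × ZMod n =>
    ({Sum.inl p.1, Sum.inr p.2, Sum.inr (p.2 + 1)} : Finset (Bool ⊕ ZMod n))

/-!
In `BP n` a zigzag is determined by two consecutive edges, since the faces are triangles and every
edge lies on only two of them. An explicit zigzag goes round the bipyramid in blocks of three edges
`{2m, 2m+1}, {a, 2m+1}, {a, 2m+2}` whose apex `a` alternates between blocks. For odd `n`, the map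
`m ↦ (parity of m, 2m mod n)` is onto `Bool × ZMod n` with kernel `2nℤ`, so every pair of sides of a
face occurs consecutively in this zigzag, read forwards or backwards. Hence every zigzag is a shift
or a reversal of it, and it has period `6n` and passes every edge exactly twice per period.
-/

open Function

lemma Finset.eq_pair_of_subset_triple {α : Type*} [DecidableEq α] {x y z : α} {e : Finset α}
    (h : e ⊆ {x, y, z}) (hc : e.card = 2) : e = {x, y} ∨ e = {x, z} ∨ e = {y, z} := by
  obtain ⟨u, v, huv, rfl⟩ := card_eq_two.mp hc
  have hu : u ∈ ({x, y, z} : Finset α) := h (by simp)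
  have hv : v ∈ ({x, y, z} : Finset α) := h (by simp)
  simp only [mem_insert, mem_singleton] at hu hv
  rcases hu with rfl | rfl | rfl <;> rcases hv with rfl | rfl | rfl <;>
    simp_all [pair_comm]

lemma ZMod.natCast_ne_zero_of_lt {n k : ℕ} (hk : 0 < k) (hkn : k < n) : (k : ZMod n) ≠ 0 := by
  rw [Ne, ZMod.natCast_eq_zero_iff]
  exact fun h => absurd (Nat.le_of_dvd hk h) (not_le.mpr hkn)

lemma Int.exists_eq_three_mul_add (j : ℤ) : ∃ m, j = 3 * m ∨ j = 3 * m + 1 ∨ j = 3 * m + 2 :=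
  ⟨j / 3, by omega⟩

section Periodic

variable {α : Type*}

lemma periodic_comp_affine_iff (g : ℤ → α) (ε : ℤˣ) (c k : ℤ) :
    Periodic (fun t => g (ε * t + c)) k ↔ Periodic g k := by
  rcases Int.units_eq_one_or ε with rfl | rfl
  · simp only [Units.val_one, one_mul]
    refine ⟨fun h x => ?_, fun h => h.add_const c⟩
    have := h (x - c)
    beta_reduce at this
    rwa [show x - c + k + c = x + k by ring, sub_add_cancel] at this
  · simp only [Units.val_neg, Units.val_one, neg_one_mul]
    refine ⟨fun h x => ?_, fun h t => by simpa only [neg_add_eq_sub] using h.const_sub c t⟩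
    have := h (c - x - k)
    beta_reduce at this
    rw [show -(c - x - k + k) + c = x by ring, show -(c - x - k) + c = x + k by ring] at this
    exact this.symm

lemma Function.Periodic.eq_of_intCast_eq {g : ℤ → α} {N : ℕ} (hg : Periodic g N) {j j' : ℤ}
    (h : (j : ZMod N) = j') : g j = g j' := by
  obtain ⟨t, ht⟩ := (ZMod.intCast_eq_intCast_iff_dvd_sub _ _ _).mp h
  rw [eq_add_of_sub_eq' ht, mul_comm]
  exact (hg.int_mul t j).symm

lemma card_filter_range_eq_card_filter_zmod {N : ℕ} [NeZero N] (P : ZMod N → Prop)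
    [DecidablePred P] :
    ((range N).filter fun i : ℕ => P i).card = (univ.filter P).card :=
  card_nbij' (fun i => (i : ZMod N)) ZMod.val
    (fun _ hi => mem_filter.mpr ⟨mem_univ _, (mem_filter.mp hi).2⟩)
    (fun x hx => mem_filter.mpr ⟨mem_range.mpr (ZMod.val_lt x),
      by rw [ZMod.natCast_zmod_val]; exact (mem_filter.mp hx).2⟩)
    (fun i hi => ZMod.val_cast_of_lt (mem_range.mp (mem_filter.mp hi).1))
    (fun x _ => ZMod.natCast_zmod_val x)

lemma Function.Periodic.card_filter_range_comp_affine [DecidableEq α] {g : ℤ → α} {N : ℕ}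
    [NeZero N] (hg : Periodic g N) (ε : ℤˣ) (c : ℤ) (a : α) :
    ((range N).filter fun i : ℕ => g (ε * i + c) = a).card =
      ((range N).filter fun i : ℕ => g i = a).card := by
  set P : ZMod N → Prop := fun x => g x.val = a
  have hP (j : ℤ) : g j = a ↔ P j := by
    simp only [P, ZMod.natCast_val]
    rw [hg.eq_of_intCast_eq (ZMod.intCast_zmod_cast (j : ZMod N)).symm]
  simp only [hP, Int.cast_add, Int.cast_mul, Int.cast_natCast]
  rw [card_filter_range_eq_card_filter_zmod (fun x : ZMod N => P (((ε : ℤ) : ZMod N) * x + c)),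
    card_filter_range_eq_card_filter_zmod P]
  rcases Int.units_eq_one_or ε with rfl | rfl
  · exact card_equiv (Equiv.addRight c) (by simp)
  · exact card_equiv (Equiv.subLeft c) (by simp [neg_add_eq_sub])

end Periodic

def mod3Cases {α : Type*} (f₀ f₁ f₂ : ℤ → α) (j : ℤ) : α :=
  if j % 3 = 0 then f₀ (j / 3) else if j % 3 = 1 then f₁ (j / 3) else f₂ (j / 3)

section Mod3Cases

variable {α : Type*} (f₀ f₁ f₂ : ℤ → α) (m : ℤ)

@[simp] lemma mod3Cases_three_mul : mod3Cases f₀ f₁ f₂ (3 * m) = f₀ m := by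
  simp [mod3Cases]

@[simp] lemma mod3Cases_three_mul_add_one : mod3Cases f₀ f₁ f₂ (3 * m + 1) = f₁ m := by
  have h₁ : (3 * m + 1) % 3 = 1 := by omega
  have h₂ : (3 * m + 1) / 3 = m := by omega
  simp [mod3Cases, h₁, h₂]

@[simp] lemma mod3Cases_three_mul_add_two : mod3Cases f₀ f₁ f₂ (3 * m + 2) = f₂ m := by
  have h₁ : (3 * m + 2) % 3 = 2 := by omega
  have h₂ : (3 * m + 2) / 3 = m := by omega
  simp [mod3Cases, h₁, h₂]

@[simp] lemma mod3Cases_zero : mod3Cases f₀ f₁ f₂ 0 = f₀ 0 := by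
  simp [mod3Cases]

@[simp] lemma mod3Cases_one : mod3Cases f₀ f₁ f₂ 1 = f₁ 0 := by
  simp [mod3Cases]

@[simp] lemma mod3Cases_three_mul_add_three : mod3Cases f₀ f₁ f₂ (3 * m + 3) = f₀ (m + 1) := by
  rw [show 3 * m + 3 = 3 * (m + 1) by ring, mod3Cases_three_mul]

@[simp] lemma mod3Cases_three_mul_add_four : mod3Cases f₀ f₁ f₂ (3 * m + 4) = f₁ (m + 1) := by
  rw [show 3 * m + 4 = 3 * (m + 1) + 1 by ring, mod3Cases_three_mul_add_one]

lemma periodic_mod3Cases {p : ℤ} (h₀ : Periodic f₀ p) (h₁ : Periodic f₁ p) (h₂ : Periodic f₂ p) :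
    Periodic (mod3Cases f₀ f₁ f₂) (3 * p) := by
  intro j
  obtain ⟨m, rfl | rfl | rfl⟩ := Int.exists_eq_three_mul_add j
  · rw [← mul_add, mod3Cases_three_mul, mod3Cases_three_mul, h₀]
  · rw [add_right_comm, ← mul_add, mod3Cases_three_mul_add_one, mod3Cases_three_mul_add_one, h₁]
  · rw [add_right_comm, ← mul_add, mod3Cases_three_mul_add_two, mod3Cases_three_mul_add_two, h₂]

end Mod3Cases

namespace Triangulation

variable {V : Type} [DecidableEq V] {T : Triangulation V}

lemma card_eq_two_of_mem_edges {e : Finset V} (he : e ∈ T.edges) : e.card = 2 := by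
  obtain ⟨f, -, hf⟩ := mem_biUnion.mp he
  exact (mem_powersetCard.mp hf).2

lemma eq_of_edge_subset_three_faces
    (hedge : ∀ e ∈ T.edges, (T.faces.filter fun f => e ⊆ f).card ≤ 2)
    {e f₁ f₂ f₃ : Finset V} (he : e ∈ T.edges)
    (hf₁ : f₁ ∈ T.faces) (hf₂ : f₂ ∈ T.faces) (hf₃ : f₃ ∈ T.faces)
    (he₁ : e ⊆ f₁) (he₂ : e ⊆ f₂) (he₃ : e ⊆ f₃) (h₂₁ : f₂ ≠ f₁) (h₃₁ : f₃ ≠ f₁) :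
    f₂ = f₃ := by
  by_contra h₂₃
  have hlt : 2 < (T.faces.filter fun f => e ⊆ f).card :=
    two_lt_card_iff.mpr ⟨f₁, f₂, f₃, mem_filter.mpr ⟨hf₁, he₁⟩, mem_filter.mpr ⟨hf₂, he₂⟩,
      mem_filter.mpr ⟨hf₃, he₃⟩, h₂₁.symm, h₃₁.symm, h₂₃⟩
  exact absurd (hedge e he) (not_le.mpr hlt)

namespace Zigzag

lemma head_mem_left (Z : T.Zigzag) (i : ℤ) : Z.head i ∈ Z.e i :=
  (mem_inter.mp (Z.inter_eq i ▸ mem_singleton_self _)).1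

lemma head_mem_right (Z : T.Zigzag) (i : ℤ) : Z.head i ∈ Z.e (i + 1) :=
  (mem_inter.mp (Z.inter_eq i ▸ mem_singleton_self _)).2

lemma f_eq_union (hface : ∀ f ∈ T.faces, f.card = 3) (Z : T.Zigzag) (i : ℤ) :
    Z.f i = Z.e i ∪ Z.e (i + 1) := by
  have hcard := card_union_add_card_inter (Z.e i) (Z.e (i + 1))
  rw [Z.inter_eq, card_singleton, card_eq_two_of_mem_edges (Z.e_mem _),
    card_eq_two_of_mem_edges (Z.e_mem _)] at hcard
  refine (eq_of_subset_of_card_le (union_subset (Z.sub_left i) (Z.sub_right i)) ?_).symm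
  rw [hface _ (Z.f_mem i)]
  omega

lemma e_add_two (hface : ∀ f ∈ T.faces, f.card = 3) (Z : T.Zigzag) (i : ℤ) :
    Z.e (i + 2) = (Z.f (i + 1)).erase (Z.head i) := by
  have hsub : Z.e (i + 2) ⊆ (Z.f (i + 1)).erase (Z.head i) := by
    refine subset_erase.mpr ⟨?_, disjoint_left.mp (Z.disj i) (Z.head_mem_left i)⟩
    simpa only [add_assoc, one_add_one_eq_two] using Z.sub_right (i + 1)
  refine eq_of_subset_of_card_le hsub ?_
  rw [card_erase_of_mem (Z.sub_left _ (Z.head_mem_right i)), hface _ (Z.f_mem _),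
    card_eq_two_of_mem_edges (Z.e_mem _)]

def rev (Z : T.Zigzag) : T.Zigzag where
  e i := Z.e (-i)
  f i := Z.f (-i - 1)
  head i := Z.head (-i - 1)
  e_mem i := Z.e_mem _
  f_mem i := Z.f_mem _
  sub_left i := by simpa using Z.sub_right (-i - 1)
  sub_right i := by simpa [neg_add_eq_sub] using Z.sub_left (-i - 1)
  edges_ne i := by simpa [neg_add_eq_sub] using (Z.edges_ne (-i - 1)).symm
  faces_ne i := by
    have h := (Z.faces_ne (-i - 2)).symm
    rwa [show -i - 2 + 1 = -i - 1 by ring, show -i - 2 = -(i + 1) - 1 by ring] at h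
  disj i := by simpa [neg_add_eq_sub] using (Z.disj (-i - 2)).symm
  inter_eq i := by simpa [neg_add_eq_sub, inter_comm] using Z.inter_eq (-i - 1)
  exists_period := by
    obtain ⟨p, hp, h⟩ := Z.exists_period
    refine ⟨p, hp, fun i => ⟨?_, ?_, ?_⟩⟩
    · rw [← (h (-(i + p))).1]; congr 1; ring
    · rw [← (h (-(i + p) - 1)).2.1]; congr 1; ring
    · rw [← (h (-(i + p) - 1)).2.2]; congr 1; ring

@[simp] lemma rev_e (Z : T.Zigzag) (i : ℤ) : Z.rev.e i = Z.e (-i) := rfl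

lemma e_add_two_eq_of_e_eq (hface : ∀ f ∈ T.faces, f.card = 3)
    (hedge : ∀ e ∈ T.edges, (T.faces.filter fun f => e ⊆ f).card ≤ 2)
    {Z W : T.Zigzag} {i j : ℤ} (h₀ : Z.e i = W.e j)
    (h₁ : Z.e (i + 1) = W.e (j + 1)) : Z.e (i + 2) = W.e (j + 2) := by
  have hf : Z.f i = W.f j := by rw [f_eq_union hface, f_eq_union hface, h₀, h₁]
  have hf' : Z.f (i + 1) = W.f (j + 1) :=
    eq_of_edge_subset_three_faces hedge (Z.e_mem _) (Z.f_mem i) (Z.f_mem _) (W.f_mem _)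
      (Z.sub_right i) (Z.sub_left _) (h₁ ▸ W.sub_left _) (Z.faces_ne i).symm
      (hf ▸ (W.faces_ne j).symm)
  have hhead : Z.head i = W.head j :=
    singleton_injective (by rw [← Z.inter_eq, ← W.inter_eq, h₀, h₁])
  rw [e_add_two hface, e_add_two hface, hf', hhead]

lemma e_sub_one_eq_of_e_eq (hface : ∀ f ∈ T.faces, f.card = 3)
    (hedge : ∀ e ∈ T.edges, (T.faces.filter fun f => e ⊆ f).card ≤ 2)
    {Z W : T.Zigzag} {i j : ℤ} (h₀ : Z.e i = W.e j)
    (h₁ : Z.e (i + 1) = W.e (j + 1)) : Z.e (i - 1) = W.e (j - 1) := by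
  have h := e_add_two_eq_of_e_eq hface hedge (Z := Z.rev) (W := W.rev) (i := -(i + 1))
    (j := -(j + 1)) (by simpa using h₁) (by simpa [neg_add_eq_sub] using h₀)
  rwa [rev_e, rev_e, show -(-(i + 1) + 2) = i - 1 by ring,
    show -(-(j + 1) + 2) = j - 1 by ring] at h

lemma e_add_eq_of_e_eq (hface : ∀ f ∈ T.faces, f.card = 3)
    (hedge : ∀ e ∈ T.edges, (T.faces.filter fun f => e ⊆ f).card ≤ 2)
    {Z W : T.Zigzag} {i j : ℤ} (h₀ : Z.e i = W.e j)
    (h₁ : Z.e (i + 1) = W.e (j + 1)) (t : ℤ) : Z.e (i + t) = W.e (j + t) := by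
  suffices Z.e (i + t) = W.e (j + t) ∧ Z.e (i + t + 1) = W.e (j + t + 1) from this.1
  induction t using Int.induction_on with
  | zero => simpa using ⟨h₀, h₁⟩
  | succ k ih =>
    refine ⟨by simpa only [add_assoc] using ih.2, ?_⟩
    simpa only [add_assoc, one_add_one_eq_two] using e_add_two_eq_of_e_eq hface hedge ih.1 ih.2
  | pred k ih =>
    refine ⟨?_, by simpa only [sub_add_cancel, add_sub_assoc'] using ih.1⟩
    simpa only [add_sub_assoc'] using e_sub_one_eq_of_e_eq hface hedge ih.1 ih.2

lemma mult_eq_card (Z : T.Zigzag) (a : Finset V) :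
    Z.mult a = ((range Z.length).filter fun i : ℕ => Z.e i = a).card := by
  have himage : (do let i ← range Z.length; pure (i : ℤ) : Finset ℤ) =
      (range Z.length).image (fun i : ℕ => (i : ℤ)) := by
    ext x
    simp [Finset.bind_def]
  rw [mult, himage, filter_image, card_image_of_injective _ Nat.cast_injective]

lemma length_eq_of_periodic_iff {Z : T.Zigzag} {N : ℕ} (hN : 0 < N)
    (h : ∀ k : ℤ, Periodic Z.e k ↔ (N : ℤ) ∣ k) : Z.length = N := by
  have hset : {k : ℕ | 0 < k ∧ ∀ i, Z.e (i + k) = Z.e i} = {k | 0 < k ∧ N ∣ k} := by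
    ext k
    simp only [Set.mem_ofPred_eq, ← Int.natCast_dvd_natCast, ← h]
    rfl
  rw [length, hset]
  exact le_antisymm (Nat.sInf_le ⟨hN, dvd_rfl⟩)
    (le_csInf ⟨N, hN, dvd_rfl⟩ fun k hk => Nat.le_of_dvd hk.1 hk.2)

lemma equiv_of_e_eq_affine {Z W : T.Zigzag} {g : ℤ → Finset V} {ε δ : ℤˣ} {c d : ℤ}
    (hZ : ∀ t, Z.e t = g (ε * t + c)) (hW : ∀ t, W.e t = g (δ * t + d)) : Z.Equiv W := by
  rcases Int.units_eq_one_or ε with rfl | rfl <;> rcases Int.units_eq_one_or δ with rfl | rfl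
  · exact Or.inl ⟨d - c, fun i => by rw [hW, hZ]; congr 1; push_cast; ring⟩
  · exact Or.inr ⟨d - c, fun i => by rw [hW, hZ]; congr 1; push_cast; ring⟩
  · exact Or.inr ⟨c - d, fun i => by rw [hW, hZ]; congr 1; push_cast; ring⟩
  · exact Or.inl ⟨c - d, fun i => by rw [hW, hZ]; congr 1; push_cast; ring⟩

end Zigzag

end Triangulation

namespace BP

variable {n : ℕ}

lemma zmod_numerals_ne (hn : 3 ≤ n) :
    (1 : ZMod n) ≠ 0 ∧ (2 : ZMod n) ≠ 0 ∧ (2 : ZMod n) ≠ 1 := by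
  have h1 := ZMod.natCast_ne_zero_of_lt (n := n) (k := 1) one_pos (by omega)
  have h2 := ZMod.natCast_ne_zero_of_lt (n := n) (k := 2) two_pos (by omega)
  push_cast at h1 h2
  refine ⟨h1, h2, fun h => h1 ?_⟩
  linear_combination h

def face (s : Bool) (i : ZMod n) : Finset (Bool ⊕ ZMod n) := {.inl s, .inr i, .inr (i + 1)}

def spoke (s : Bool) (i : ZMod n) : Finset (Bool ⊕ ZMod n) := {.inl s, .inr i}

def rim (i : ZMod n) : Finset (Bool ⊕ ZMod n) := {.inr i, .inr (i + 1)}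

lemma spoke_ne_rim (s : Bool) (i j : ZMod n) : spoke s i ≠ rim j := by
  intro h
  have : (Sum.inl s : Bool ⊕ ZMod n) ∈ rim j := h ▸ by simp [spoke]
  simp [rim] at this

lemma spoke_inj {s s' : Bool} {i j : ZMod n} : spoke s i = spoke s' j ↔ s = s' ∧ i = j := by
  rw [spoke, spoke, ← coe_inj]
  push_cast
  rw [Set.pair_eq_pair_iff]
  simp

lemma rim_inj (hn : 3 ≤ n) {i j : ZMod n} : rim i = rim j ↔ i = j := by
  obtain ⟨-, h2, -⟩ := zmod_numerals_ne hn
  rw [rim, rim, ← coe_inj]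
  push_cast
  rw [Set.pair_eq_pair_iff]
  refine ⟨?_, fun h => by simp [h]⟩
  rintro (⟨h, -⟩ | ⟨h, h'⟩)
  · simpa using h
  · simp only [Sum.inr.injEq] at h h'
    exact absurd (by linear_combination h' - h) h2

lemma face_inj (hn : 3 ≤ n) {s s' : Bool} {i j : ZMod n} :
    face s i = face s' j ↔ s = s' ∧ i = j := by
  obtain ⟨h1, h2, -⟩ := zmod_numerals_ne hn
  refine ⟨fun h => ?_, fun h => by rw [h.1, h.2]⟩
  have hs : Sum.inl s ∈ face s' j := h ▸ by simp [face]
  have hi : Sum.inr i ∈ face s' j := h ▸ by simp [face]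
  have hi' : Sum.inr (i + 1) ∈ face s' j := h ▸ by simp [face]
  simp only [face, mem_insert, mem_singleton, Sum.inl.injEq, Sum.inr.injEq, reduceCtorEq,
    false_or, or_false] at hs hi hi'
  refine ⟨hs, hi.resolve_right fun hi => ?_⟩
  rcases hi' with h | h
  · exact h2 (by linear_combination h - hi)
  · exact h1 (by linear_combination h - hi)

lemma card_face (hn : 3 ≤ n) (s : Bool) (i : ZMod n) : (face s i).card = 3 := by
  obtain ⟨h1, -, -⟩ := zmod_numerals_ne hn
  rw [face, card_insert_of_notMem (by simp), card_pair (by simpa using h1)]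

def blockApex (m : ℤ) : Bool := decide (Odd m)

def blockStart (n : ℕ) (m : ℤ) : ZMod n := 2 * m

@[simp] lemma blockApex_add_one (m : ℤ) : blockApex (m + 1) = !blockApex m := by
  simp [blockApex, ← Int.not_odd_iff_even]

@[simp] lemma blockStart_add_one (m : ℤ) : blockStart n (m + 1) = blockStart n m + 2 := by
  simp only [blockStart, Int.cast_add, Int.cast_one]
  ring

lemma periodic_blockApex : Periodic blockApex (2 * n) := by
  intro m
  simp [blockApex, Int.odd_add, parity_simps]

lemma periodic_blockStart : Periodic (blockStart n) (2 * n) := by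
  intro m
  simp [blockStart]

lemma periodic_block {β : Type*} (g : Bool → ZMod n → β) :
    Periodic (fun m => g (blockApex m) (blockStart n m)) (2 * n) := fun m => by
  simp only [periodic_blockApex m, periodic_blockStart m]

def canonEdge (n : ℕ) : ℤ → Finset (Bool ⊕ ZMod n) :=
  mod3Cases (fun m => rim (blockStart n m)) (fun m => spoke (blockApex m) (blockStart n m + 1))
    (fun m => spoke (blockApex m) (blockStart n m + 2))

def canonFace (n : ℕ) : ℤ → Finset (Bool ⊕ ZMod n) :=
  mod3Cases (fun m => face (blockApex m) (blockStart n m))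
    (fun m => face (blockApex m) (blockStart n m + 1))
    (fun m => face (blockApex m) (blockStart n m + 2))

def canonHead (n : ℕ) : ℤ → Bool ⊕ ZMod n :=
  mod3Cases (fun m => .inr (blockStart n m + 1)) (fun m => .inl (blockApex m))
    (fun m => .inr (blockStart n m + 2))

lemma periodic_canonEdge : Periodic (canonEdge n) (6 * n : ℕ) := by
  rw [show ((6 * n : ℕ) : ℤ) = 3 * (2 * n) by push_cast; ring]
  exact periodic_mod3Cases _ _ _ (periodic_block fun _ b => rim b)
    (periodic_block fun s b => spoke s (b + 1)) (periodic_block fun s b => spoke s (b + 2))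

lemma periodic_canonFace : Periodic (canonFace n) (6 * n : ℕ) := by
  rw [show ((6 * n : ℕ) : ℤ) = 3 * (2 * n) by push_cast; ring]
  exact periodic_mod3Cases _ _ _ (periodic_block face)
    (periodic_block fun s b => face s (b + 1)) (periodic_block fun s b => face s (b + 2))

lemma periodic_canonHead : Periodic (canonHead n) (6 * n : ℕ) := by
  rw [show ((6 * n : ℕ) : ℤ) = 3 * (2 * n) by push_cast; ring]
  exact periodic_mod3Cases _ _ _ (periodic_block fun _ b => Sum.inr (b + 1))
    (periodic_block fun s _ => Sum.inl s) (periodic_block fun _ b => Sum.inr (b + 2))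

lemma blockApex_add_of_odd {k : ℤ} (hk : Odd k) (m : ℤ) : blockApex (m + k) = !blockApex m := by
  simp [blockApex, Int.odd_add, ← Int.not_odd_iff_even, hk]

lemma blockApex_eq_iff {m m' : ℤ} : blockApex m = blockApex m' ↔ (2 : ℤ) ∣ m - m' := by
  rw [← even_iff_two_dvd, Int.even_sub']
  simp [blockApex]

lemma two_mul_dvd_sub_of_block_eq (hodd : Odd n) {m m' : ℤ} (ha : blockApex m = blockApex m')
    (hs : blockStart n m = blockStart n m') : (2 * n : ℤ) ∣ m - m' := by
  have hcop : IsCoprime (2 : ℤ) n := by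
    have := Nat.isCoprime_iff_coprime.mpr (Nat.coprime_two_left.mpr hodd)
    exact_mod_cast this
  have h2 : (2 : ℤ) ∣ m - m' := blockApex_eq_iff.mp ha
  have hn : (n : ℤ) ∣ m - m' := by
    refine hcop.symm.dvd_of_dvd_mul_left ?_
    rw [← ZMod.intCast_zmod_eq_zero_iff_dvd]
    simp only [blockStart] at hs
    push_cast
    linear_combination hs
  exact hcop.mul_dvd h2 hn

lemma intCast_three_mul_add_eq {m m' : ℤ} (h : (2 * n : ℤ) ∣ m - m') (r : ℤ) :
    ((3 * m + r : ℤ) : ZMod (6 * n)) = ((3 * m' + r : ℤ) : ZMod (6 * n)) := by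
  rw [ZMod.intCast_eq_intCast_iff_dvd_sub]
  push_cast
  rw [show 3 * m' + r - (3 * m + r) = 3 * (m' - m) by ring, show (6 * n : ℤ) = 3 * (2 * n) by ring]
  exact mul_dvd_mul_left 3 (dvd_sub_comm.mp h)

lemma periodic_canonEdge_iff (hodd : Odd n) (hn : 3 ≤ n) (k : ℤ) :
    Periodic (canonEdge n) k ↔ ((6 * n : ℕ) : ℤ) ∣ k := by
  refine ⟨fun h => ?_, fun ⟨t, ht⟩ => ht ▸ mul_comm t _ ▸ periodic_canonEdge.int_mul t⟩
  have h₀ := h 0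
  rw [zero_add] at h₀
  obtain ⟨m, rfl | rfl | rfl⟩ := Int.exists_eq_three_mul_add k
  · have h₁ := h 1
    rw [add_comm] at h₁
    simp only [canonEdge, mod3Cases_zero, mod3Cases_one, mod3Cases_three_mul,
      mod3Cases_three_mul_add_one, rim_inj hn, spoke_inj] at h₀ h₁
    have := intCast_three_mul_add_eq (two_mul_dvd_sub_of_block_eq hodd h₁.1 h₀) 0
    rw [ZMod.intCast_eq_intCast_iff_dvd_sub] at this
    simpa using this
  all_goals simp [canonEdge, spoke_ne_rim] at h₀

variable [NeZero n]

lemma mem_faces_iff {f : Finset (Bool ⊕ ZMod n)} : f ∈ (BP n).faces ↔ ∃ s i, f = face s i := by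
  simp [BP, face, eq_comm]

lemma face_mem_faces (s : Bool) (i : ZMod n) : face s i ∈ (BP n).faces :=
  mem_faces_iff.mpr ⟨s, i, rfl⟩

lemma card_of_mem_faces (hn : 3 ≤ n) {f : Finset (Bool ⊕ ZMod n)} (hf : f ∈ (BP n).faces) :
    f.card = 3 := by
  obtain ⟨s, i, rfl⟩ := mem_faces_iff.mp hf
  exact card_face hn s i

lemma mem_edges_of_subset_face {e : Finset (Bool ⊕ ZMod n)} {s : Bool} {i : ZMod n}
    (he : e ⊆ face s i) (hc : e.card = 2) : e ∈ (BP n).edges :=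
  mem_biUnion.mpr ⟨face s i, face_mem_faces s i, mem_powersetCard.mpr ⟨he, hc⟩⟩

lemma spoke_mem_edges (s : Bool) (i : ZMod n) : spoke s i ∈ (BP n).edges :=
  mem_edges_of_subset_face (s := s) (i := i) (by simp [spoke, face, insert_subset_iff])
    (card_pair (by simp))

lemma rim_mem_edges (hn : 3 ≤ n) (i : ZMod n) : rim i ∈ (BP n).edges := by
  obtain ⟨h1, -, -⟩ := zmod_numerals_ne hn
  exact mem_edges_of_subset_face (s := true) (i := i) (by simp [rim, face])
    (card_pair (by simpa using h1))

lemma eq_spoke_or_eq_rim_of_mem_edges {e : Finset (Bool ⊕ ZMod n)} (he : e ∈ (BP n).edges) :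
    (∃ s i, e = spoke s i) ∨ ∃ i, e = rim i := by
  obtain ⟨f, hf, hef⟩ := mem_biUnion.mp he
  obtain ⟨hsub, hc⟩ := mem_powersetCard.mp hef
  obtain ⟨s, i, rfl⟩ := mem_faces_iff.mp hf
  rcases eq_pair_of_subset_triple hsub hc with rfl | rfl | rfl
  exacts [Or.inl ⟨s, i, rfl⟩, Or.inl ⟨s, i + 1, rfl⟩, Or.inr ⟨i, rfl⟩]

lemma faces_of_spoke_subset {s : Bool} {i : ZMod n} {f : Finset (Bool ⊕ ZMod n)}
    (hf : f ∈ (BP n).faces) (he : spoke s i ⊆ f) : f = face s i ∨ f = face s (i - 1) := by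
  obtain ⟨s', k, rfl⟩ := mem_faces_iff.mp hf
  simp only [spoke, face, insert_subset_iff, singleton_subset_iff, mem_insert, mem_singleton,
    Sum.inl.injEq, Sum.inr.injEq, reduceCtorEq, false_or, or_false] at he
  obtain ⟨rfl, rfl | rfl⟩ := he
  · exact Or.inl rfl
  · exact Or.inr (by rw [add_sub_cancel_right])

lemma faces_of_rim_subset (hn : 3 ≤ n) {i : ZMod n} {f : Finset (Bool ⊕ ZMod n)}
    (hf : f ∈ (BP n).faces) (he : rim i ⊆ f) : f = face true i ∨ f = face false i := by
  obtain ⟨h1, h2, -⟩ := zmod_numerals_ne hn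
  obtain ⟨s, k, rfl⟩ := mem_faces_iff.mp hf
  simp only [rim, face, insert_subset_iff, singleton_subset_iff, mem_insert, mem_singleton,
    Sum.inr.injEq, reduceCtorEq, false_or] at he
  obtain ⟨rfl | rfl, h | h⟩ := he
  · exact absurd (by linear_combination h) h1
  · cases s <;> simp
  · exact absurd (by linear_combination h) h2
  · exact absurd (by linear_combination h) h1

lemma card_faces_containing_le_two (hn : 3 ≤ n) {e : Finset (Bool ⊕ ZMod n)}
    (he : e ∈ (BP n).edges) : ((BP n).faces.filter fun f => e ⊆ f).card ≤ 2 := by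
  rcases eq_spoke_or_eq_rim_of_mem_edges he with ⟨s, i, rfl⟩ | ⟨i, rfl⟩
  · refine (card_le_card fun f hf => ?_).trans (card_le_two (a := face s i) (b := face s (i - 1)))
    simpa using faces_of_spoke_subset (mem_filter.mp hf).1 (mem_filter.mp hf).2
  · refine (card_le_card fun f hf => ?_).trans (card_le_two (a := face true i) (b := face false i))
    simpa using faces_of_rim_subset hn (mem_filter.mp hf).1 (mem_filter.mp hf).2

def canonZigzag (hn : 3 ≤ n) : (BP n).Zigzag where
  e := canonEdge n
  f := canonFace n
  head := canonHead n
  e_mem j := by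
    obtain ⟨m, rfl | rfl | rfl⟩ := Int.exists_eq_three_mul_add j <;>
      simp [canonEdge, spoke_mem_edges, rim_mem_edges hn]
  f_mem j := by
    obtain ⟨m, rfl | rfl | rfl⟩ := Int.exists_eq_three_mul_add j <;>
      simp [canonFace, face_mem_faces]
  sub_left j := by
    obtain ⟨m, rfl | rfl | rfl⟩ := Int.exists_eq_three_mul_add j <;>
      simp [canonEdge, canonFace, spoke, rim, face, insert_subset_iff]
  sub_right j := by
    obtain ⟨m, rfl | rfl | rfl⟩ := Int.exists_eq_three_mul_add j <;>
      simp [canonEdge, canonFace, spoke, rim, face, insert_subset_iff, add_assoc,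
        one_add_one_eq_two]
  edges_ne j := by
    obtain ⟨-, -, h21⟩ := zmod_numerals_ne hn
    obtain ⟨m, rfl | rfl | rfl⟩ := Int.exists_eq_three_mul_add j <;>
      simp [canonEdge, add_assoc, spoke_ne_rim, (spoke_ne_rim _ _ _).symm, spoke_inj, h21.symm]
  faces_ne j := by
    obtain ⟨h1, -, h21⟩ := zmod_numerals_ne hn
    obtain ⟨m, rfl | rfl | rfl⟩ := Int.exists_eq_three_mul_add j <;>
      simp [canonFace, add_assoc, face_inj hn, h1, h21.symm]
  disj j := by
    obtain ⟨h1, h2, h21⟩ := zmod_numerals_ne hn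
    obtain ⟨m, rfl | rfl | rfl⟩ := Int.exists_eq_three_mul_add j <;>
      simp [canonEdge, add_assoc, spoke, rim, h1, h2, h21]
  inter_eq j := by
    obtain ⟨h1, -, h21⟩ := zmod_numerals_ne hn
    obtain ⟨m, rfl | rfl | rfl⟩ := Int.exists_eq_three_mul_add j <;>
      simp [canonEdge, canonHead, add_assoc, spoke, rim, h1, h21]
  exists_period := ⟨6 * n, by have := NeZero.pos n; omega,
    fun i => ⟨periodic_canonEdge i, periodic_canonFace i, periodic_canonHead i⟩⟩

lemma exists_block (hodd : Odd n) (s : Bool) (i : ZMod n) :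
    ∃ m, blockApex m = s ∧ blockStart n m = i := by
  obtain ⟨k, hk⟩ := id hodd
  have h0 : (2 * k + 1 : ZMod n) = 0 := by
    have := congrArg (Nat.cast : ℕ → ZMod n) hk
    push_cast at this
    rw [← this, ZMod.natCast_self]
  -- `k + 1` inverts `2` modulo `n = 2k + 1`; adding `n` to `m` flips the apex only
  have hstart (t : ℤ) : blockStart n ((k + 1) * i.val + n * t) = i := by
    simp only [blockStart]
    push_cast
    rw [ZMod.natCast_self, ZMod.natCast_zmod_val]
    linear_combination i * h0
  by_cases hs : blockApex ((k + 1) * i.val) = s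
  · exact ⟨_, by simpa using hs, by simpa using hstart 0⟩
  · refine ⟨_, ?_, hstart 1⟩
    rw [mul_one, blockApex_add_of_odd hodd.natCast]
    revert hs
    cases blockApex _ <;> cases s <;> simp

lemma exists_canonEdge_rim_spoke (hodd : Odd n) (s : Bool) (i : ZMod n) :
    ∃ c, canonEdge n c = rim i ∧ canonEdge n (c + 1) = spoke s (i + 1) := by
  obtain ⟨m, rfl, rfl⟩ := exists_block hodd s i
  exact ⟨3 * m, by simp [canonEdge]⟩

lemma exists_canonEdge_spoke_spoke (hodd : Odd n) (s : Bool) (i : ZMod n) :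
    ∃ c, canonEdge n c = spoke s i ∧ canonEdge n (c + 1) = spoke s (i + 1) := by
  obtain ⟨m, rfl, hm⟩ := exists_block hodd s (i - 1)
  obtain rfl : i = blockStart n m + 1 := by rw [hm]; ring
  exact ⟨3 * m + 1, by simp [canonEdge, add_assoc, one_add_one_eq_two]⟩

lemma exists_canonEdge_spoke_rim (hodd : Odd n) (s : Bool) (i : ZMod n) :
    ∃ c, canonEdge n c = spoke s i ∧ canonEdge n (c + 1) = rim i := by
  obtain ⟨m, rfl, hm⟩ := exists_block hodd s (i - 2)
  obtain rfl : i = blockStart n m + 2 := by rw [hm]; ring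
  exact ⟨3 * m + 2, by simp [canonEdge, add_assoc]⟩

lemma exists_canonEdge_consecutive (hodd : Odd n) {s : Bool} {i : ZMod n}
    {x y : Finset (Bool ⊕ ZMod n)} (hx : x ⊆ face s i) (hxc : x.card = 2) (hy : y ⊆ face s i)
    (hyc : y.card = 2) (hxy : x ≠ y) :
    ∃ c, (canonEdge n c = x ∧ canonEdge n (c + 1) = y) ∨
      (canonEdge n c = y ∧ canonEdge n (c + 1) = x) := by
  have h₁ := exists_canonEdge_rim_spoke hodd s i
  have h₂ := exists_canonEdge_spoke_spoke hodd s i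
  have h₃ := exists_canonEdge_spoke_rim hodd s i
  rcases eq_pair_of_subset_triple hx hxc with rfl | rfl | rfl <;>
  rcases eq_pair_of_subset_triple hy hyc with rfl | rfl | rfl <;>
  first
    | exact absurd rfl hxy
    | exact h₁.imp fun _ => Or.inl | exact h₁.imp fun _ => Or.inr
    | exact h₂.imp fun _ => Or.inl | exact h₂.imp fun _ => Or.inr
    | exact h₃.imp fun _ => Or.inl | exact h₃.imp fun _ => Or.inr

lemma e_eq_canonEdge (hodd : Odd n) (hn : 3 ≤ n) (Z : (BP n).Zigzag) :
    ∃ (ε : ℤˣ) (c : ℤ), ∀ t, Z.e t = canonEdge n (ε * t + c) := by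
  have hface : ∀ f ∈ (BP n).faces, f.card = 3 := fun f hf => card_of_mem_faces hn hf
  have hedge := fun e (he : e ∈ (BP n).edges) => card_faces_containing_le_two hn he
  obtain ⟨s, i, hf⟩ := mem_faces_iff.mp (Z.f_mem 0)
  obtain ⟨c, ⟨h₀, h₁⟩ | ⟨h₁, h₀⟩⟩ := exists_canonEdge_consecutive hodd (hf ▸ Z.sub_left 0)
    (Triangulation.card_eq_two_of_mem_edges (Z.e_mem 0)) (hf ▸ Z.sub_right 0)
    (Triangulation.card_eq_two_of_mem_edges (Z.e_mem _)) (Z.edges_ne 0)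
  · refine ⟨1, c, fun t => ?_⟩
    have := Triangulation.Zigzag.e_add_eq_of_e_eq hface hedge (Z := canonZigzag hn) (W := Z)
      (i := c) (j := 0) h₀ h₁ t
    rw [zero_add] at this
    rw [← this, Units.val_one, one_mul, add_comm]
    rfl
  · refine ⟨-1, c + 1, fun t => ?_⟩
    have := Triangulation.Zigzag.e_add_eq_of_e_eq hface hedge (Z := (canonZigzag hn).rev) (W := Z)
      (i := -(c + 1)) (j := 0) (by rw [Triangulation.Zigzag.rev_e, neg_neg]; exact h₀)
      (by rw [Triangulation.Zigzag.rev_e, neg_add, neg_neg, add_neg_cancel_right]; exact h₁) t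
    rw [zero_add] at this
    rw [← this, Triangulation.Zigzag.rev_e]
    show canonEdge n _ = canonEdge n _
    congr 1
    push_cast
    ring

lemma exists_canonEdge_eq_rim_iff (hodd : Odd n) (hn : 3 ≤ n) (i : ZMod n) :
    ∃ x₁ x₂ : ZMod (6 * n), x₁ ≠ x₂ ∧
      ∀ j : ℤ, canonEdge n j = rim i ↔ (j : ZMod (6 * n)) = x₁ ∨ (j : ZMod (6 * n)) = x₂ := by
  obtain ⟨m₁, ha₁, hs₁⟩ := exists_block hodd false i
  obtain ⟨m₂, ha₂, hs₂⟩ := exists_block hodd true i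
  refine ⟨(3 * m₁ + 0 : ℤ), (3 * m₂ + 0 : ℤ), fun h => ?_, fun j => ⟨fun hj => ?_, fun hj => ?_⟩⟩
  · -- both occurrences lie in blocks of different parity
    obtain ⟨t, ht⟩ := (ZMod.intCast_eq_intCast_iff_dvd_sub _ _ _).mp h
    have : blockApex m₂ = blockApex m₁ := blockApex_eq_iff.mpr ⟨n * t, by push_cast at ht; linarith⟩
    simp [ha₁, ha₂] at this
  · obtain ⟨m, rfl | rfl | rfl⟩ := Int.exists_eq_three_mul_add j
    · simp only [canonEdge, mod3Cases_three_mul, rim_inj hn] at hj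
      rw [← add_zero (3 * m)]
      cases ha : blockApex m
      · exact Or.inl (intCast_three_mul_add_eq
          (two_mul_dvd_sub_of_block_eq hodd (ha.trans ha₁.symm) (hj.trans hs₁.symm)) 0)
      · exact Or.inr (intCast_three_mul_add_eq
          (two_mul_dvd_sub_of_block_eq hodd (ha.trans ha₂.symm) (hj.trans hs₂.symm)) 0)
    all_goals simp [canonEdge, spoke_ne_rim] at hj
  · rcases hj with hj | hj <;> rw [periodic_canonEdge.eq_of_intCast_eq hj, add_zero] <;>
      simp [canonEdge, hs₁, hs₂]

lemma exists_canonEdge_eq_spoke_iff (hodd : Odd n) (s : Bool) (i : ZMod n) :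
    ∃ x₁ x₂ : ZMod (6 * n), x₁ ≠ x₂ ∧
      ∀ j : ℤ, canonEdge n j = spoke s i ↔ (j : ZMod (6 * n)) = x₁ ∨ (j : ZMod (6 * n)) = x₂ := by
  obtain ⟨m₁, ha₁, hs₁⟩ := exists_block hodd s (i - 1)
  obtain ⟨m₂, ha₂, hs₂⟩ := exists_block hodd s (i - 2)
  refine ⟨(3 * m₁ + 1 : ℤ), (3 * m₂ + 2 : ℤ), fun h => ?_, fun j => ⟨fun hj => ?_, fun hj => ?_⟩⟩
  · obtain ⟨t, ht⟩ := (ZMod.intCast_eq_intCast_iff_dvd_sub _ _ _).mp h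
    push_cast at ht
    have : (3 : ℤ) ∣ 3 * m₂ + 2 - (3 * m₁ + 1) := ⟨2 * n * t, by rw [ht]; ring⟩
    omega
  · obtain ⟨m, rfl | rfl | rfl⟩ := Int.exists_eq_three_mul_add j
    · simp only [canonEdge, mod3Cases_three_mul] at hj
      exact absurd hj.symm (spoke_ne_rim _ _ _)
    · simp only [canonEdge, mod3Cases_three_mul_add_one, spoke_inj] at hj
      exact Or.inl (intCast_three_mul_add_eq (two_mul_dvd_sub_of_block_eq hodd
        (hj.1.trans ha₁.symm) (by rw [hs₁, ← hj.2]; ring)) 1)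
    · simp only [canonEdge, mod3Cases_three_mul_add_two, spoke_inj] at hj
      exact Or.inr (intCast_three_mul_add_eq (two_mul_dvd_sub_of_block_eq hodd
        (hj.1.trans ha₂.symm) (by rw [hs₂, ← hj.2]; ring)) 2)
  · rcases hj with hj | hj <;> rw [periodic_canonEdge.eq_of_intCast_eq hj] <;>
      simp [canonEdge, ha₁, ha₂, hs₁, hs₂]

lemma card_filter_range_canonEdge (hodd : Odd n) (hn : 3 ≤ n) {a : Finset (Bool ⊕ ZMod n)}
    (ha : a ∈ (BP n).edges) : ((range (6 * n)).filter fun i : ℕ => canonEdge n i = a).card = 2 := by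
  obtain ⟨x₁, x₂, hne, hocc⟩ : ∃ x₁ x₂ : ZMod (6 * n), x₁ ≠ x₂ ∧
      ∀ j : ℤ, canonEdge n j = a ↔ (j : ZMod (6 * n)) = x₁ ∨ (j : ZMod (6 * n)) = x₂ := by
    rcases eq_spoke_or_eq_rim_of_mem_edges ha with ⟨s, i, rfl⟩ | ⟨i, rfl⟩
    exacts [exists_canonEdge_eq_spoke_iff hodd s i, exists_canonEdge_eq_rim_iff hodd hn i]
  simp only [hocc, Int.cast_natCast]
  rw [card_filter_range_eq_card_filter_zmod (fun x => x = x₁ ∨ x = x₂), ← card_pair hne]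
  congr 1
  ext x
  simp

end BP

/-- For the `n`-gonal bipyramid `BP n` with `n` odd, there is
exactly one zigzag up to reversal; that is, `BP n` is z-knotted, and the
unique zigzag has length `6n` (it traverses every edge exactly twice). -/
theorem stmt3 (n : ℕ) [NeZero n] (hodd : Odd n) (hn : 3 ≤ n) :
    (BP n).IsZKnotted ∧
    ∀ Z : (BP n).Zigzag, Z.length = 6 * n ∧ ∀ a ∈ (BP n).edges, Z.mult a = 2 := by
  refine ⟨⟨⟨BP.canonZigzag hn⟩, fun Z W => ?_⟩, fun Z => ?_⟩
  · obtain ⟨ε, c, hZ⟩ := BP.e_eq_canonEdge hodd hn Z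
    obtain ⟨δ, d, hW⟩ := BP.e_eq_canonEdge hodd hn W
    exact Triangulation.Zigzag.equiv_of_e_eq_affine hZ hW
  obtain ⟨ε, c, hZ⟩ := BP.e_eq_canonEdge hodd hn Z
  have he : Z.e = fun t => BP.canonEdge n (ε * t + c) := funext hZ
  have hlength : Z.length = 6 * n := by
    refine Z.length_eq_of_periodic_iff (by have := NeZero.pos n; omega) fun k => ?_
    rw [he, periodic_comp_affine_iff, BP.periodic_canonEdge_iff hodd hn]
  refine ⟨hlength, fun a ha => ?_⟩
  simp only [Z.mult_eq_card, hlength, he]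
  rw [BP.periodic_canonEdge.card_filter_range_comp_affine]
  exact BP.card_filter_range_canonEdge hodd hn ha
end

section
/- If Γ' is a closed 2-cell embedding of a connected simple finite graph in a closed surface M, then the barycentric-type subdivision T(Γ') obtained by adding one new vertex inside each face and joining it to all vertices of that face is a triangulation of M: all its faces are triangles, and the embedded graph is simple and connected. -/
open Finset
open scoped Classical

/-- The vertex following position `i` in the boundary cycle `l`. -/
def nextGet {V : Type} (l : List V) (i : Fin l.length) : V :=
  l.get ⟨((i : ℕ) + 1) % l.length, Nat.mod_lt _ i.pos⟩

/-- The multiset of (undirected) edges of a map given by its list of boundary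
cycles, counted with multiplicity over all face incidences. -/
def mapEdges {V : Type} [DecidableEq V] (L : List (List V)) : Multiset (Finset V) :=
  ↑(L.flatMap fun l => (List.finRange l.length).map fun i =>
      ({l.get i, nextGet l i} : Finset V))

/-- The underlying simple graph of a map given by boundary cycles. -/
def mapGraph {V : Type} [DecidableEq V] (L : List (List V)) : SimpleGraph V where
  Adj x y := x ≠ y ∧ ({x, y} : Finset V) ∈ mapEdges L
  symm := ⟨fun x y h => ⟨h.1.symm, by rw [Finset.pair_comm y x]; exact h.2⟩⟩
  loopless := ⟨fun x h => h.1 rfl⟩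

/-- The triangulation `T(Γ')` obtained from a map with boundary cycles `L` by
adding one new vertex inside each face and joining it to all vertices of that
face. -/
def mapSubdivision {V : Type} [DecidableEq V] (L : List (List V)) :
    Triangulation (V ⊕ Fin L.length) where
  faces := (Finset.univ : Finset ((j : Fin L.length) × Fin (L.get j).length)).image
    fun p => ({Sum.inr p.1, Sum.inl ((L.get p.1).get p.2),
               Sum.inl (nextGet (L.get p.1) p.2)} : Finset (V ⊕ Fin L.length))

/-!
Every triangle of `T(Γ')` is spanned by the new vertex of a face `F` and one side of `F`. An edge
of `T(Γ')` between two old vertices is an edge of `Γ'`, so it lies in the triangles over its two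
face incidences. A spoke from the new vertex of `F` to a vertex `x` of `F` lies in the triangles
over the two sides of `F` at `x`; these differ, and distinct sides span distinct triangles,
because a boundary cycle has no repeated vertex and length at least 3. Connectivity holds since
`Γ'` sits inside `T(Γ')` and every new vertex is adjacent to an old one.
-/

lemma Finset.card_filter_sigma_fst_eq {ι : Type*} {α : ι → Type*} [DecidableEq ι] [Fintype ι]
    [∀ i, Fintype (α i)] (j : ι) (P : (Σ i, α i) → Prop) [DecidablePred P] :
    #{p : Σ i, α i | P p ∧ p.1 = j} = #{a : α j | P ⟨j, a⟩} := by
  symm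
  apply card_bij (fun a _ => ⟨j, a⟩)
  · intro a ha
    simpa using ha
  · intro a _ b _ h
    exact sigma_mk_injective h
  · rintro ⟨i, a⟩ hp
    obtain ⟨hp, rfl⟩ := (mem_filter.mp hp).2
    exact ⟨a, by simpa using hp, rfl⟩

lemma Finset.card_inter_lt_of_card_eq {α : Type*} [DecidableEq α] {s t : Finset α} {n : ℕ}
    (hs : #s = n) (ht : #t = n) (hst : s ≠ t) : #(s ∩ t) < n := by
  by_contra! h
  have hs' : s ∩ t = s := eq_of_subset_of_card_le inter_subset_left (by omega)
  have ht' : s ∩ t = t := eq_of_subset_of_card_le inter_subset_right (by omega)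
  exact hst (hs'.symm.trans ht')

lemma Triangulation.card_of_mem_edges {V : Type} [DecidableEq V] {T : Triangulation V}
    {e : Finset V} (he : e ∈ T.edges) : #e = 2 := by
  obtain ⟨f, -, hef⟩ := mem_biUnion.mp he
  exact (mem_powersetCard.mp hef).2

lemma Fin.one_ne_zero_of_two_le {n : ℕ} [NeZero n] (h : 2 ≤ n) : (1 : Fin n) ≠ 0 := by
  simp [Fin.ext_iff, Nat.mod_eq_of_lt (show 1 < n by omega)]

lemma Fin.two_ne_zero_of_three_le {n : ℕ} [NeZero n] (h : 3 ≤ n) : (2 : Fin n) ≠ 0 := by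
  simp [Fin.ext_iff, Nat.mod_eq_of_lt (show 2 < n by omega)]

section BoundaryCycle

open Fin.CommRing

variable {V : Type} {l : List V}

lemma nextGet_eq_get_add_one [NeZero l.length] (i : Fin l.length) :
    nextGet l i = l.get (i + 1) := by
  unfold nextGet
  congr 1
  ext
  simp [Fin.val_add]

lemma get_ne_nextGet (hl : l.Nodup) (h2 : 2 ≤ l.length) (i : Fin l.length) :
    l.get i ≠ nextGet l i := by
  have : NeZero l.length := ⟨by omega⟩
  rw [nextGet_eq_get_add_one, Ne, hl.get_inj_iff, left_eq_add]
  exact Fin.one_ne_zero_of_two_le h2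

variable [DecidableEq V]

lemma pair_get_nextGet_injective (hl : l.Nodup) (h3 : 3 ≤ l.length) :
    Function.Injective fun i => ({l.get i, nextGet l i} : Finset V) := by
  have : NeZero l.length := ⟨by omega⟩
  intro i j hij
  simp only [nextGet_eq_get_add_one] at hij
  have hi : l.get i ∈ ({l.get j, l.get (j + 1)} : Finset V) := hij ▸ by simp
  have hi' : l.get (i + 1) ∈ ({l.get j, l.get (j + 1)} : Finset V) := hij ▸ by simp
  simp only [Finset.mem_insert, Finset.mem_singleton, hl.get_inj_iff] at hi hi'
  obtain rfl | rfl := hi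
  · rfl
  exfalso
  obtain h | h := hi'
  · exact Fin.two_ne_zero_of_three_le h3 (by linear_combination h)
  · exact Fin.one_ne_zero_of_two_le (n := l.length) (by omega) (by linear_combination h)

lemma card_filter_mem_pair_get_nextGet (hl : l.Nodup) (h2 : 2 ≤ l.length) {x : V}
    (hx : x ∈ l) : #{i | x ∈ ({l.get i, nextGet l i} : Finset V)} = 2 := by
  have : NeZero l.length := ⟨by omega⟩
  obtain ⟨k, rfl⟩ := List.mem_iff_get.mp hx
  have hk : ({i | l.get k ∈ ({l.get i, nextGet l i} : Finset V)} : Finset _) = {k, k - 1} := by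
    ext i
    simp [nextGet_eq_get_add_one, hl.getElem_inj_iff, Fin.ext_iff, eq_sub_iff_add_eq, eq_comm]
  rw [hk, card_pair]
  intro h
  exact Fin.one_ne_zero_of_two_le h2 (by linear_combination h)

end BoundaryCycle

section Subdivision

variable {V : Type} [DecidableEq V] {L : List (List V)}

/-- `⟨j, i⟩` is the side of face `j` joining its `i`-th and `(i+1)`-st boundary vertices. -/
abbrev FaceSide (L : List (List V)) := (j : Fin L.length) × Fin (L.get j).length

def sideEdge (L : List (List V)) (p : FaceSide L) : Finset V :=
  {(L.get p.1).get p.2, nextGet (L.get p.1) p.2}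

/-- The new vertex placed inside face `j` is `Sum.inr j`. -/
def sideTriangle (L : List (List V)) (p : FaceSide L) : Finset (V ⊕ Fin L.length) :=
  (sideEdge L p).disjSum {p.1}

lemma mapSubdivision_faces : (mapSubdivision L).faces = univ.image (sideTriangle L) := by
  ext f
  simp only [mapSubdivision, sideTriangle, sideEdge, mem_image, mem_univ, true_and]
  congr! 3 with p
  ext z
  rcases z with x | j <;> simp

lemma mapEdges_eq_map_sideEdge :
    mapEdges L = (univ : Finset (FaceSide L)).val.map (sideEdge L) := by
  have huniv : (univ : Finset (FaceSide L)).val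
      = Multiset.sigma (↑(List.finRange L.length))
          fun j => ↑(List.finRange (L.get j).length) := by
    rw [← univ_sigma_univ]
    simp only [Fin.univ_def]
    rfl
  rw [huniv, Multiset.coe_sigma, Multiset.map_coe, mapEdges]
  congr 1
  conv_lhs => rw [← List.map_get_finRange L]
  simp only [List.sigma, List.flatMap_map, List.map_flatMap, List.map_map]
  rfl

lemma count_mapEdges (a : Finset V) : (mapEdges L).count a = #{p | sideEdge L p = a} := by
  rw [mapEdges_eq_map_sideEdge, Multiset.count_map]
  simp_rw [eq_comm (a := a)]
  rfl

lemma mem_mapEdges {a : Finset V} : a ∈ mapEdges L ↔ ∃ p, sideEdge L p = a := by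
  simp [mapEdges_eq_map_sideEdge]

lemma mem_of_mem_sideEdge {p : FaceSide L} {x : V} (hx : x ∈ sideEdge L p) : x ∈ L.get p.1 := by
  rcases mem_insert.mp hx with rfl | hx
  · exact List.get_mem _ _
  · rw [mem_singleton.mp hx]
    exact List.get_mem _ _

lemma mem_edges_mapSubdivision {e : Finset (V ⊕ Fin L.length)} :
    e ∈ (mapSubdivision L).edges ↔ ∃ p, e ⊆ sideTriangle L p ∧ #e = 2 := by
  simp [Triangulation.edges, mapSubdivision_faces]

lemma card_sideEdge (hcycle : ∀ l ∈ L, l.Nodup ∧ 3 ≤ l.length)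
    (p : FaceSide L) : #(sideEdge L p) = 2 := by
  have ⟨hl, h3⟩ := hcycle _ (L.get_mem p.1)
  exact card_pair (get_ne_nextGet hl (by omega) p.2)

lemma card_sideTriangle (hcycle : ∀ l ∈ L, l.Nodup ∧ 3 ≤ l.length)
    (p : FaceSide L) : #(sideTriangle L p) = 3 := by
  rw [sideTriangle, card_disjSum, card_sideEdge hcycle, card_singleton]

lemma sideTriangle_injective (hcycle : ∀ l ∈ L, l.Nodup ∧ 3 ≤ l.length) :
    Function.Injective (sideTriangle L) := by
  rintro ⟨j, i⟩ ⟨j', i'⟩ h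
  obtain ⟨he, hj⟩ := disjSum_inj.mp h
  obtain rfl : j = j' := singleton_injective hj
  have ⟨hl, h3⟩ := hcycle _ (L.get_mem j)
  obtain rfl : i = i' := pair_get_nextGet_injective hl h3 he
  rfl

lemma card_filter_faces (hcycle : ∀ l ∈ L, l.Nodup ∧ 3 ≤ l.length)
    (P : Finset (V ⊕ Fin L.length) → Prop) [DecidablePred P] :
    #{f ∈ (mapSubdivision L).faces | P f} = #{p | P (sideTriangle L p)} := by
  rw [mapSubdivision_faces, filter_image, card_image_of_injective _ (sideTriangle_injective hcycle)]

lemma card_filter_map_inl_subset_sideTriangle (hcycle : ∀ l ∈ L, l.Nodup ∧ 3 ≤ l.length)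
    {a : Finset V} (ha : #a = 2) :
    #{p | a.map .inl ⊆ sideTriangle L p} = (mapEdges L).count a := by
  rw [count_mapEdges]
  congr! 2 with p
  rw [sideTriangle, map_inl_subset_iff_subset_toLeft, toLeft_disjSum]
  exact ⟨fun h => (eq_of_subset_of_card_le h (by rw [card_sideEdge hcycle, ha])).symm,
    fun h => h.superset⟩

lemma card_filter_spoke_subset_sideTriangle (hcycle : ∀ l ∈ L, l.Nodup ∧ 3 ≤ l.length)
    {j : Fin L.length} {x : V} (hx : x ∈ L.get j) :
    #{p | ({x} : Finset V).disjSum {j} ⊆ sideTriangle L p} = 2 := by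
  have ⟨hl, h3⟩ := hcycle _ (L.get_mem j)
  simp only [sideTriangle, disjSum_subset, toLeft_disjSum, toRight_disjSum, singleton_subset_iff,
    mem_singleton, eq_comm (a := j), card_filter_sigma_fst_eq]
  exact card_filter_mem_pair_get_nextGet hl (by omega) hx

lemma card_filter_faces_superset (hcycle : ∀ l ∈ L, l.Nodup ∧ 3 ≤ l.length)
    (hedge2 : ∀ a ∈ mapEdges L, (mapEdges L).count a = 2)
    {e : Finset (V ⊕ Fin L.length)} (he : e ∈ (mapSubdivision L).edges) :
    #{f ∈ (mapSubdivision L).faces | e ⊆ f} = 2 := by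
  obtain ⟨p, hsub, he2⟩ := mem_edges_mapSubdivision.mp he
  obtain ⟨hleft, hright⟩ := subset_disjSum.mp hsub
  rw [card_filter_faces hcycle, ← toLeft_disjSum_toRight (u := e)]
  rw [← card_toLeft_add_card_toRight] at he2
  rcases subset_singleton_iff.mp hright with hr | hr
  · rw [hr, card_empty, add_zero] at he2
    rw [hr, disjSum_empty, card_filter_map_inl_subset_sideTriangle hcycle he2]
    refine hedge2 _ (mem_mapEdges.mpr ⟨p, ?_⟩)
    exact (eq_of_subset_of_card_le hleft (by rw [card_sideEdge hcycle, he2])).symm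
  · rw [hr, card_singleton] at he2
    obtain ⟨x, hx⟩ := card_eq_one.mp (by omega : #e.toLeft = 1)
    rw [hr, hx]
    rw [hx, singleton_subset_iff] at hleft
    exact card_filter_spoke_subset_sideTriangle hcycle (mem_of_mem_sideEdge hleft)

theorem mapSubdivision_isProper (hcycle : ∀ l ∈ L, l.Nodup ∧ 3 ≤ l.length)
    (hedge2 : ∀ a ∈ mapEdges L, (mapEdges L).count a = 2) :
    (mapSubdivision L).IsProper := by
  have htri : ∀ f ∈ (mapSubdivision L).faces, #f = 3 := by
    rw [mapSubdivision_faces]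
    rintro _ hf
    obtain ⟨p, -, rfl⟩ := mem_image.mp hf
    exact card_sideTriangle hcycle p
  refine ⟨htri, fun e he => ?_, fun f hf g hg hfg => ?_⟩
  · convert card_filter_faces_superset hcycle hedge2 he
  · exact Nat.le_of_lt_succ (card_inter_lt_of_card_eq (htri f hf) (htri g hg) hfg)

lemma mapSubdivision_graph_adj {a b : V ⊕ Fin L.length} {p : FaceSide L} (hab : a ≠ b)
    (h : {a, b} ⊆ sideTriangle L p) : (mapSubdivision L).graph.Adj a b :=
  ⟨hab, mem_edges_mapSubdivision.mpr ⟨p, h, card_pair hab⟩⟩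

lemma mapSubdivision_graph_adj_inl_inl {x y : V} (h : (mapGraph L).Adj x y) :
    (mapSubdivision L).graph.Adj (.inl x) (.inl y) := by
  obtain ⟨p, hp⟩ := mem_mapEdges.mp h.2
  refine mapSubdivision_graph_adj (p := p) (by simpa using h.1) ?_
  simp [insert_subset_iff, sideTriangle, hp]

lemma mapSubdivision_graph_adj_inr_inl {j : Fin L.length} {x : V} (hx : x ∈ L.get j) :
    (mapSubdivision L).graph.Adj (.inr j) (.inl x) := by
  obtain ⟨i, rfl⟩ := List.mem_iff_get.mp hx
  refine mapSubdivision_graph_adj (p := ⟨j, i⟩) (by simp) ?_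
  simp [insert_subset_iff, sideTriangle, sideEdge]

theorem mapSubdivision_graph_connected (hcycle : ∀ l ∈ L, l.Nodup ∧ 3 ≤ l.length)
    (hconn : (mapGraph L).Connected) : (mapSubdivision L).graph.Connected := by
  have reach_inl (x y : V) : (mapSubdivision L).graph.Reachable (.inl x) (.inl y) :=
    (hconn.preconnected x y).map ⟨Sum.inl, mapSubdivision_graph_adj_inl_inl⟩
  have reach (u : V ⊕ Fin L.length) (y : V) : (mapSubdivision L).graph.Reachable u (.inl y) := by
    rcases u with x | j
    · exact reach_inl x y
    · obtain ⟨x, hx⟩ := List.exists_mem_of_length_pos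
        (by linarith [(hcycle _ (L.get_mem j)).2] : 0 < (L.get j).length)
      exact (mapSubdivision_graph_adj_inr_inl hx).reachable.trans (reach_inl x y)
  obtain ⟨y⟩ := hconn.nonempty
  have : Nonempty (V ⊕ Fin L.length) := ⟨.inl y⟩
  exact ⟨fun u v => (reach u y).trans (reach v y).symm⟩

end Subdivision

theorem stmt8_general {V : Type} [DecidableEq V] (L : List (List V))
    (hcycle : ∀ l ∈ L, l.Nodup ∧ 3 ≤ l.length)
    (hedge2 : ∀ a ∈ mapEdges L, (mapEdges L).count a = 2)
    (hconn : (mapGraph L).Connected) :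
    (mapSubdivision L).IsProper ∧
    (∀ a ∈ (mapSubdivision L).edges, a.card = 2) ∧
    (mapSubdivision L).graph.Connected :=
  ⟨mapSubdivision_isProper hcycle hedge2, fun _ => Triangulation.card_of_mem_edges,
    mapSubdivision_graph_connected hcycle hconn⟩

/-- If `Γ'` is a closed 2-cell embedding of a connected simple
finite graph in a closed surface `M` (given combinatorially by its list `L` of
face boundary cycles: each boundary is a cycle without repeated vertices of
length at least 3, and every edge lies in exactly two face incidences), then
the subdivision `T(Γ')` obtained by adding one new vertex inside each face and
joining it to all vertices of that face is a triangulation of `M`: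
all its faces are triangles, every edge lies in exactly two faces, two faces
meet in at most an edge, all edges are simple (two distinct endpoints), and
the embedded graph is connected. -/
theorem stmt8 {V : Type} [DecidableEq V] (L : List (List V)) (hL : L ≠ [])
    (hcycle : ∀ l ∈ L, l.Nodup ∧ 3 ≤ l.length)
    (hedge2 : ∀ a ∈ mapEdges L, (mapEdges L).count a = 2)
    (hconn : (mapGraph L).Connected) :
    (mapSubdivision L).IsProper ∧
    (∀ a ∈ (mapSubdivision L).edges, a.card = 2) ∧
    (mapSubdivision L).graph.Connected :=
  stmt8_general L hcycle hedge2 hconn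
end
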